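/- The Maslov grading M(x) = J(x - O, x - O) + 1 of a grid state is invariant under cyclic permutation of the rows of the grid diagram: if both the generator x and the set O of O-markings are rotated vertically by one unit (points at the top are wrapped to the bottom), then M is unchanged. -/
import Mathlib


/-- `Ipairs A B` counts pairs `(a, b) ∈ A × B` with `a` strictly dominated by `b`
in both coordinates. -/
def Ipairs (A B : Finset (ℚ × ℚ)) : ℕ :=
  ((A ×ˢ B).filter (fun p => p.1.1 < p.2.1 ∧ p.1.2 < p.2.2)).card

/-- `Jpairs A B = (I(A,B) + I(B,A))/2`. -/
def Jpairs (A B : Finset (ℚ × ℚ)) : ℚ :=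
  ((Ipairs A B : ℚ) + (Ipairs B A : ℚ)) / 2

/-- The grid state associated to a permutation `σ`: points `(i, σ i)`,
one in each row and column of `[0,n) × [0,n)`, with integer coordinates. -/
def statePts (n : ℕ) (σ : Equiv.Perm (Fin n)) : Finset (ℚ × ℚ) :=
  Finset.univ.image (fun i : Fin n => ((i.val : ℚ), ((σ i).val : ℚ)))

/-- The `O`-markings associated to a permutation `τ`: points `(i + ½, τ i + ½)`,
one in each row and column, with half-integer coordinates. -/
def markPts (n : ℕ) (τ : Equiv.Perm (Fin n)) : Finset (ℚ × ℚ) :=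
  Finset.univ.image (fun i : Fin n => ((i.val : ℚ) + 1/2, ((τ i).val : ℚ) + 1/2))

/-- The Maslov grading `M(x) = J(x-O, x-O) + 1 = J(x,x) - 2J(x,O) + J(O,O) + 1`. -/
def Maslov (x O : Finset (ℚ × ℚ)) : ℚ :=
  Jpairs x x - 2 * Jpairs x O + Jpairs O O + 1

/-- Vertical rotation by one unit of the `n × n` grid: points at the top wrap
around to the bottom. -/
def vrot (n : ℕ) (p : ℚ × ℚ) : ℚ × ℚ :=
  (p.1, if p.2 + 1 < n then p.2 + 1 else p.2 + 1 - n)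

/-! ### Auxiliary machinery -/

open Finset

/-- Count pairs of indices satisfying a predicate. -/
def cnt2 {n : ℕ} (P : Fin n → Fin n → Prop) [DecidableRel P] : ℕ :=
  (Finset.univ.filter fun p : Fin n × Fin n => P p.1 p.2).card

lemma cnt2_eq_sum {n : ℕ} (P : Fin n → Fin n → Prop) [DecidableRel P] :
    (cnt2 P : ℤ) = ∑ i : Fin n, ∑ j : Fin n, (if P i j then (1:ℤ) else 0) := by
  rw [cnt2, Finset.card_filter]
  push_cast
  rw [Fintype.sum_prod_type]

lemma cnt2_congr {n : ℕ} (P Q : Fin n → Fin n → Prop) [DecidableRel P] [DecidableRel Q]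
    (h : ∀ i j, P i j ↔ Q i j) : cnt2 P = cnt2 Q := by
  unfold cnt2
  congr 1
  apply Finset.filter_congr
  intro p _
  simpa using h p.1 p.2

lemma Ipairs_image {n : ℕ} (f g : Fin n → ℚ × ℚ)
    (hf : Function.Injective f) (hg : Function.Injective g) :
    Ipairs (Finset.univ.image f) (Finset.univ.image g)
      = cnt2 (fun i j => (f i).1 < (g j).1 ∧ (f i).2 < (g j).2) := by
  rw [Ipairs, cnt2]
  refine (Finset.card_bij (fun p _ => (f p.1, g p.2)) ?_ ?_ ?_).symm
  · intro p hp
    simp only [Finset.mem_filter, Finset.mem_univ, true_and] at hp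
    simp only [Finset.mem_filter, Finset.mem_product, Finset.mem_image]
    exact ⟨⟨⟨p.1, Finset.mem_univ _, rfl⟩, ⟨p.2, Finset.mem_univ _, rfl⟩⟩, hp⟩
  · intro p _ q _ h
    have h1 : f p.1 = f q.1 := congrArg Prod.fst h
    have h2 : g p.2 = g q.2 := congrArg Prod.snd h
    exact Prod.ext (hf h1) (hg h2)
  · intro q hq
    obtain ⟨q1, q2⟩ := q
    simp only [Finset.mem_filter, Finset.mem_product, Finset.mem_image] at hq
    obtain ⟨⟨⟨i, _, hi⟩, ⟨j, _, hj⟩⟩, hcond⟩ := hq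
    subst hi
    subst hj
    refine ⟨(i, j), ?_, rfl⟩
    simp only [Finset.mem_filter, Finset.mem_univ, true_and]
    exact hcond

lemma state_inj (n : ℕ) (σ : Equiv.Perm (Fin n)) :
    Function.Injective (fun i : Fin n => ((i.val : ℚ), ((σ i).val : ℚ))) := by
  intro a b h
  have h1 : ((a.val : ℚ)) = b.val := congrArg Prod.fst h
  exact Fin.ext (by exact_mod_cast h1)

lemma mark_inj (n : ℕ) (τ : Equiv.Perm (Fin n)) :
    Function.Injective (fun i : Fin n => ((i.val : ℚ) + 1/2, ((τ i).val : ℚ) + 1/2)) := by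
  intro a b h
  have h1 : ((a.val : ℚ)) + 1/2 = b.val + 1/2 := congrArg Prod.fst h
  have h2 : ((a.val : ℚ)) = b.val := by linarith
  exact Fin.ext (by exact_mod_cast h2)

lemma rat_lt_add_half (a b : ℕ) : (a:ℚ) < (b:ℚ) + 1/2 ↔ a ≤ b := by
  constructor
  · intro h
    by_contra hc
    push_neg at hc
    have h2 : ((b:ℚ) + 1) ≤ a := by exact_mod_cast hc
    linarith
  · intro h
    have : (a:ℚ) ≤ b := by exact_mod_cast h
    linarith

lemma rat_add_half_lt (a b : ℕ) : (a:ℚ) + 1/2 < b ↔ a < b := by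
  constructor
  · intro h
    by_contra hc
    push_neg at hc
    have h2 : (b:ℚ) ≤ a := by exact_mod_cast hc
    linarith
  · intro h
    have : (a:ℚ) + 1 ≤ b := by exact_mod_cast h
    linarith

/-! ### Expressing the four pair-counts combinatorially -/

lemma Ipairs_ss (n : ℕ) (σ σ' : Equiv.Perm (Fin n)) :
    Ipairs (statePts n σ) (statePts n σ')
      = cnt2 (fun i j => i < j ∧ σ i < σ' j) := by
  rw [statePts, statePts, Ipairs_image _ _ (state_inj n σ) (state_inj n σ')]
  apply cnt2_congr
  intro i j
  rw [Nat.cast_lt, Nat.cast_lt, Fin.lt_def, Fin.lt_def]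

lemma Ipairs_sm (n : ℕ) (σ τ : Equiv.Perm (Fin n)) :
    Ipairs (statePts n σ) (markPts n τ)
      = cnt2 (fun i j => i ≤ j ∧ σ i ≤ τ j) := by
  rw [statePts, markPts, Ipairs_image _ _ (state_inj n σ) (mark_inj n τ)]
  apply cnt2_congr
  intro i j
  rw [rat_lt_add_half, rat_lt_add_half, Fin.le_def, Fin.le_def]

lemma Ipairs_ms (n : ℕ) (τ σ : Equiv.Perm (Fin n)) :
    Ipairs (markPts n τ) (statePts n σ)
      = cnt2 (fun i j => i < j ∧ τ i < σ j) := by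
  rw [statePts, markPts, Ipairs_image _ _ (mark_inj n τ) (state_inj n σ)]
  apply cnt2_congr
  intro i j
  rw [rat_add_half_lt, rat_add_half_lt, Fin.lt_def, Fin.lt_def]

lemma Ipairs_mm (n : ℕ) (τ τ' : Equiv.Perm (Fin n)) :
    Ipairs (markPts n τ) (markPts n τ')
      = cnt2 (fun i j => i < j ∧ τ i < τ' j) := by
  rw [markPts, markPts, Ipairs_image _ _ (mark_inj n τ) (mark_inj n τ')]
  apply cnt2_congr
  intro i j
  rw [add_lt_add_iff_right, add_lt_add_iff_right, Nat.cast_lt, Nat.cast_lt,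
    Fin.lt_def, Fin.lt_def]

lemma Maslov_eq (n : ℕ) (σ τ : Equiv.Perm (Fin n)) :
    Maslov (statePts n σ) (markPts n τ)
      = (cnt2 (fun i j => i < j ∧ σ i < σ j) : ℚ)
        - (cnt2 (fun i j => i ≤ j ∧ σ i ≤ τ j) : ℚ)
        - (cnt2 (fun i j => i < j ∧ τ i < σ j) : ℚ)
        + (cnt2 (fun i j => i < j ∧ τ i < τ j) : ℚ) + 1 := by
  rw [Maslov, Jpairs, Jpairs, Jpairs, Ipairs_ss, Ipairs_sm, Ipairs_ms, Ipairs_mm]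
  ring

/-! ### The effect of vertical rotation on the point sets -/

lemma vrot_val (m : ℕ) (a : Fin (m+1)) :
    (if (a.val:ℚ) + 1 < ((m+1:ℕ):ℚ) then (a.val:ℚ) + 1 else (a.val:ℚ) + 1 - ((m+1:ℕ):ℚ))
      = ((finRotate (m+1) a).val : ℚ) := by
  rw [finRotate_succ_apply, Fin.val_add_one]
  by_cases h : a = Fin.last m
  · have hv : a.val = m := by rw [h]; rfl
    rw [if_pos h, if_neg]
    · rw [hv]; push_cast; ring
    · rw [hv]; push_cast; linarith
  · have hv : a.val < m := by
      have h1 := a.isLt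
      have h2 : a.val ≠ m := fun hc => h (Fin.ext (by simpa using hc))
      omega
    rw [if_neg h, if_pos]
    · push_cast; ring
    · push_cast
      have : (a.val : ℚ) + 1 ≤ m := by exact_mod_cast hv
      linarith

lemma vrot_val_half (m : ℕ) (a : Fin (m+1)) :
    (if ((a.val:ℚ) + 1/2) + 1 < ((m+1:ℕ):ℚ) then ((a.val:ℚ) + 1/2) + 1
      else ((a.val:ℚ) + 1/2) + 1 - ((m+1:ℕ):ℚ))
      = ((finRotate (m+1) a).val : ℚ) + 1/2 := by
  rw [finRotate_succ_apply, Fin.val_add_one]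
  by_cases h : a = Fin.last m
  · have hv : a.val = m := by rw [h]; rfl
    rw [if_pos h, if_neg]
    · rw [hv]; push_cast; ring
    · rw [hv]; push_cast; linarith
  · have hv : a.val < m := by
      have h1 := a.isLt
      have h2 : a.val ≠ m := fun hc => h (Fin.ext (by simpa using hc))
      omega
    rw [if_neg h, if_pos]
    · push_cast; ring
    · push_cast
      have : (a.val : ℚ) + 1 ≤ m := by exact_mod_cast hv
      linarith

lemma vrot_statePts (m : ℕ) (σ : Equiv.Perm (Fin (m+1))) :
    (statePts (m+1) σ).image (vrot (m+1)) = statePts (m+1) (finRotate (m+1) * σ) := by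
  rw [statePts, statePts, Finset.image_image]
  apply Finset.image_congr
  intro i _
  show vrot (m+1) _ = _
  rw [vrot]
  refine Prod.ext rfl ?_
  show (if ((σ i).val:ℚ) + 1 < ((m+1:ℕ):ℚ) then ((σ i).val:ℚ) + 1
    else ((σ i).val:ℚ) + 1 - ((m+1:ℕ):ℚ)) = _
  rw [vrot_val m (σ i)]
  rfl

lemma vrot_markPts (m : ℕ) (τ : Equiv.Perm (Fin (m+1))) :
    (markPts (m+1) τ).image (vrot (m+1)) = markPts (m+1) (finRotate (m+1) * τ) := by
  rw [markPts, markPts, Finset.image_image]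
  apply Finset.image_congr
  intro i _
  show vrot (m+1) _ = _
  rw [vrot]
  refine Prod.ext rfl ?_
  show (if (((τ i).val:ℚ) + 1/2) + 1 < ((m+1:ℕ):ℚ) then (((τ i).val:ℚ) + 1/2) + 1
    else (((τ i).val:ℚ) + 1/2) + 1 - ((m+1:ℕ):ℚ)) = _
  rw [vrot_val_half m (τ i)]
  rfl

/-! ### The key counting identity -/

lemma hS_lt (m : ℕ) (a b : Fin (m+1)) :
    ((if finRotate (m+1) a < finRotate (m+1) b then (1:ℤ) else 0) - if a < b then 1 else 0)
      = (if a = Fin.last m then 1 else 0) * (if b = Fin.last m then 0 else 1)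
        - (if a = Fin.last m then 0 else 1) * (if b = Fin.last m then 1 else 0) := by
  have key : ∀ x : Fin (m+1), (finRotate (m+1) x).val
      = if x = Fin.last m then 0 else x.val + 1 := by
    intro x; rw [finRotate_succ_apply, Fin.val_add_one]
  have h1 : (a = Fin.last m) ↔ a.val = m := by
    constructor
    · intro h; rw [h]; rfl
    · intro h; exact Fin.ext (by simpa using h)
  have h2 : (b = Fin.last m) ↔ b.val = m := by
    constructor
    · intro h; rw [h]; rfl
    · intro h; exact Fin.ext (by simpa using h)
  have ha := a.isLt
  have hb := b.isLt
  simp only [Fin.lt_def, key, h1, h2]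
  split_ifs <;> omega

lemma hS_le (m : ℕ) (a b : Fin (m+1)) :
    ((if finRotate (m+1) a ≤ finRotate (m+1) b then (1:ℤ) else 0) - if a ≤ b then 1 else 0)
      = (if a = Fin.last m then 1 else 0) * (if b = Fin.last m then 0 else 1)
        - (if a = Fin.last m then 0 else 1) * (if b = Fin.last m then 1 else 0) := by
  have key : ∀ x : Fin (m+1), (finRotate (m+1) x).val
      = if x = Fin.last m then 0 else x.val + 1 := by
    intro x; rw [finRotate_succ_apply, Fin.val_add_one]
  have h1 : (a = Fin.last m) ↔ a.val = m := by
    constructor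
    · intro h; rw [h]; rfl
    · intro h; exact Fin.ext (by simpa using h)
  have h2 : (b = Fin.last m) ↔ b.val = m := by
    constructor
    · intro h; rw [h]; rfl
    · intro h; exact Fin.ext (by simpa using h)
  have ha := a.isLt
  have hb := b.isLt
  simp only [Fin.le_def, key, h1, h2]
  split_ifs <;> omega

lemma delta_cnt {m : ℕ} (σ σ' : Equiv.Perm (Fin (m+1)))
    (R : Fin (m+1) → Fin (m+1) → Prop) [DecidableRel R]
    (S : Fin (m+1) → Fin (m+1) → Prop) [DecidableRel S]
    (hS : ∀ a b : Fin (m+1),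
      ((if S (finRotate (m+1) a) (finRotate (m+1) b) then (1:ℤ) else 0) - if S a b then 1 else 0)
        = (if a = Fin.last m then 1 else 0) * (if b = Fin.last m then 0 else 1)
          - (if a = Fin.last m then 0 else 1) * (if b = Fin.last m then 1 else 0)) :
    (cnt2 (fun i j => R i j ∧ S (finRotate (m+1) (σ i)) (finRotate (m+1) (σ' j))) : ℤ)
      - (cnt2 (fun i j => R i j ∧ S (σ i) (σ' j)) : ℤ)
    = ((Finset.univ.filter fun j => R (σ⁻¹ (Fin.last m)) j).card : ℤ)
      - ((Finset.univ.filter fun i => R i (σ'⁻¹ (Fin.last m))).card : ℤ) := by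
  set L := Fin.last m with hL
  set i₀ := σ⁻¹ L with hi₀
  set j₀ := σ'⁻¹ L with hj₀
  have hσ : ∀ i, (σ i = L) ↔ (i = i₀) := by
    intro i
    constructor
    · intro h; rw [hi₀, ← h]; simp
    · intro h; rw [h, hi₀]; simp
  have hσ' : ∀ j, (σ' j = L) ↔ (j = j₀) := by
    intro j
    constructor
    · intro h; rw [hj₀, ← h]; simp
    · intro h; rw [h, hj₀]; simp
  have key : ∀ i j : Fin (m+1),
      ((if R i j ∧ S (finRotate (m+1) (σ i)) (finRotate (m+1) (σ' j)) then (1:ℤ) else 0)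
        - if R i j ∧ S (σ i) (σ' j) then 1 else 0)
      = ((if i = i₀ then (1:ℤ) else 0) * ((if R i j then 1 else 0) * (if j = j₀ then 0 else 1)))
        - ((if i = i₀ then (0:ℤ) else 1) * ((if R i j then 1 else 0) * (if j = j₀ then 1 else 0))) := by
    intro i j
    have h := hS (σ i) (σ' j)
    simp only [hσ i, hσ' j] at h
    by_cases hR : R i j
    · simp only [hR, true_and, if_true, one_mul]
      linarith [h]
    · simp [hR]
  rw [cnt2_eq_sum, cnt2_eq_sum]
  rw [← Finset.sum_sub_distrib]
  have step1 : ∀ i : Fin (m+1), ((∑ j : Fin (m+1),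
      (if R i j ∧ S (finRotate (m+1) (σ i)) (finRotate (m+1) (σ' j)) then (1:ℤ) else 0))
        - (∑ j : Fin (m+1), (if R i j ∧ S (σ i) (σ' j) then (1:ℤ) else 0)))
      = (if i = i₀ then (1:ℤ) else 0) * (∑ j : Fin (m+1),
          ((if R i j then (1:ℤ) else 0) * (if j = j₀ then 0 else 1)))
        - (if i = i₀ then (0:ℤ) else 1) * (∑ j : Fin (m+1),
          ((if R i j then (1:ℤ) else 0) * (if j = j₀ then 1 else 0))) := by
    intro i
    rw [← Finset.sum_sub_distrib, Finset.mul_sum, Finset.mul_sum, ← Finset.sum_sub_distrib]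
    apply Finset.sum_congr rfl
    intro j _
    exact key i j
  rw [Finset.sum_congr rfl (fun i _ => step1 i)]
  rw [Finset.sum_sub_distrib]
  have collapse1 : ∀ (G : Fin (m+1) → ℤ) (x : Fin (m+1)),
      (∑ i : Fin (m+1), (if i = x then (1:ℤ) else 0) * G i) = G x := by
    intro G x
    rw [Finset.sum_congr rfl (fun i _ => by rw [ite_mul, one_mul, zero_mul])]
    simp
  have collapse0 : ∀ (G : Fin (m+1) → ℤ) (x : Fin (m+1)),
      (∑ i : Fin (m+1), (if i = x then (0:ℤ) else 1) * G i) = (∑ i : Fin (m+1), G i) - G x := by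
    intro G x
    have : ∀ i : Fin (m+1), (if i = x then (0:ℤ) else 1) * G i
        = G i - (if i = x then (1:ℤ) else 0) * G i := by
      intro i; split_ifs <;> ring
    rw [Finset.sum_congr rfl (fun i _ => this i), Finset.sum_sub_distrib, collapse1]
  rw [collapse1, collapse0]
  have sum1 : (∑ j : Fin (m+1), (if R i₀ j then (1:ℤ) else 0) * (if j = j₀ then 0 else 1))
      = ((Finset.univ.filter fun j => R i₀ j).card : ℤ) - (if R i₀ j₀ then 1 else 0) := by
    have : ∀ j : Fin (m+1), (if R i₀ j then (1:ℤ) else 0) * (if j = j₀ then 0 else 1)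
        = (if R i₀ j then (1:ℤ) else 0) - (if j = j₀ then (1:ℤ) else 0) * (if R i₀ j then 1 else 0) := by
      intro j; split_ifs <;> ring
    rw [Finset.sum_congr rfl (fun j _ => this j), Finset.sum_sub_distrib, collapse1]
    rw [Finset.card_filter]
    push_cast
    ring
  have sum2 : ∀ i : Fin (m+1), (∑ j : Fin (m+1),
      (if R i j then (1:ℤ) else 0) * (if j = j₀ then 1 else 0))
      = (if R i j₀ then (1:ℤ) else 0) := by
    intro i
    have : ∀ j : Fin (m+1), (if R i j then (1:ℤ) else 0) * (if j = j₀ then 1 else 0)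
        = (if j = j₀ then (1:ℤ) else 0) * (if R i j then 1 else 0) := by
      intro j; ring
    rw [Finset.sum_congr rfl (fun j _ => this j), collapse1]
  rw [sum1]
  rw [Finset.sum_congr rfl (fun i _ => sum2 i)]
  have sum3 : (∑ i : Fin (m+1), (if R i j₀ then (1:ℤ) else 0))
      = ((Finset.univ.filter fun i => R i j₀).card : ℤ) := by
    rw [Finset.card_filter]; push_cast; ring
  rw [sum3, sum2 i₀]
  ring

/-! ### Interval cardinalities in `Fin (m+1)` -/

lemma card_gt (m : ℕ) (x : Fin (m+1)) :
    ((Finset.univ.filter fun j : Fin (m+1) => x < j).card : ℚ) = m - x.val := by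
  have h : (Finset.univ.filter fun j : Fin (m+1) => x < j) = Finset.Ioi x := by
    ext j; simp
  rw [h, Fin.card_Ioi]
  have hx : x.val ≤ m := Fin.is_le x
  have : m + 1 - 1 - x.val = m - x.val := by omega
  rw [this, Nat.cast_sub hx]

lemma card_lt (m : ℕ) (x : Fin (m+1)) :
    ((Finset.univ.filter fun j : Fin (m+1) => j < x).card : ℚ) = x.val := by
  have h : (Finset.univ.filter fun j : Fin (m+1) => j < x) = Finset.Iio x := by
    ext j; simp
  rw [h, Fin.card_Iio]

lemma card_ge (m : ℕ) (x : Fin (m+1)) :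
    ((Finset.univ.filter fun j : Fin (m+1) => x ≤ j).card : ℚ) = m + 1 - x.val := by
  have h : (Finset.univ.filter fun j : Fin (m+1) => x ≤ j) = Finset.Ici x := by
    ext j; simp
  rw [h, Fin.card_Ici]
  have hx : x.val ≤ m + 1 := le_of_lt x.isLt
  rw [Nat.cast_sub hx]
  push_cast
  ring

lemma card_le (m : ℕ) (x : Fin (m+1)) :
    ((Finset.univ.filter fun j : Fin (m+1) => j ≤ x).card : ℚ) = x.val + 1 := by
  have h : (Finset.univ.filter fun j : Fin (m+1) => j ≤ x) = Finset.Iic x := by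
    ext j; simp
  rw [h, Fin.card_Iic]
  push_cast
  ring

/-- The Maslov grading is invariant under cyclic (vertical) rotation of the rows of the
grid diagram: rotating both the generator `x` and the `O`-markings vertically by one unit
leaves `M` unchanged. -/
theorem Maslov_vrot_invariant (n : ℕ) (σ τ : Equiv.Perm (Fin n)) :
    Maslov ((statePts n σ).image (vrot n)) ((markPts n τ).image (vrot n))
      = Maslov (statePts n σ) (markPts n τ) := by
  cases n with
  | zero => simp [statePts, markPts]
  | succ m =>
    rw [vrot_statePts, vrot_markPts, Maslov_eq, Maslov_eq]
    set c := finRotate (m+1) with hc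
    set L := Fin.last m with hL
    -- rewrite composed permutations pointwise
    have e1 : cnt2 (fun i j => i < j ∧ (c * σ) i < (c * σ) j)
        = cnt2 (fun i j => i < j ∧ c (σ i) < c (σ j)) := by
      apply cnt2_congr; intro i j; simp [Equiv.Perm.mul_apply]
    have e2 : cnt2 (fun i j => i ≤ j ∧ (c * σ) i ≤ (c * τ) j)
        = cnt2 (fun i j => i ≤ j ∧ c (σ i) ≤ c (τ j)) := by
      apply cnt2_congr; intro i j; simp [Equiv.Perm.mul_apply]
    have e3 : cnt2 (fun i j => i < j ∧ (c * τ) i < (c * σ) j)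
        = cnt2 (fun i j => i < j ∧ c (τ i) < c (σ j)) := by
      apply cnt2_congr; intro i j; simp [Equiv.Perm.mul_apply]
    have e4 : cnt2 (fun i j => i < j ∧ (c * τ) i < (c * τ) j)
        = cnt2 (fun i j => i < j ∧ c (τ i) < c (τ j)) := by
      apply cnt2_congr; intro i j; simp [Equiv.Perm.mul_apply]
    rw [e1, e2, e3, e4]
    have d1 := delta_cnt σ σ (· < ·) (· < ·) (hS_lt m)
    have d2 := delta_cnt σ τ (· ≤ ·) (· ≤ ·) (hS_le m)
    have d3 := delta_cnt τ σ (· < ·) (· < ·) (hS_lt m)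
    have d4 := delta_cnt τ τ (· < ·) (· < ·) (hS_lt m)
    have q1 : (cnt2 (fun i j => i < j ∧ c (σ i) < c (σ j)) : ℚ)
        - (cnt2 (fun i j => i < j ∧ σ i < σ j) : ℚ)
        = ((Finset.univ.filter fun j => σ⁻¹ L < j).card : ℚ)
          - ((Finset.univ.filter fun i => i < σ⁻¹ L).card : ℚ) := by exact_mod_cast d1
    have q2 : (cnt2 (fun i j => i ≤ j ∧ c (σ i) ≤ c (τ j)) : ℚ)
        - (cnt2 (fun i j => i ≤ j ∧ σ i ≤ τ j) : ℚ)
        = ((Finset.univ.filter fun j => σ⁻¹ L ≤ j).card : ℚ)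
          - ((Finset.univ.filter fun i => i ≤ τ⁻¹ L).card : ℚ) := by exact_mod_cast d2
    have q3 : (cnt2 (fun i j => i < j ∧ c (τ i) < c (σ j)) : ℚ)
        - (cnt2 (fun i j => i < j ∧ τ i < σ j) : ℚ)
        = ((Finset.univ.filter fun j => τ⁻¹ L < j).card : ℚ)
          - ((Finset.univ.filter fun i => i < σ⁻¹ L).card : ℚ) := by exact_mod_cast d3
    have q4 : (cnt2 (fun i j => i < j ∧ c (τ i) < c (τ j)) : ℚ)
        - (cnt2 (fun i j => i < j ∧ τ i < τ j) : ℚ)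
        = ((Finset.univ.filter fun j => τ⁻¹ L < j).card : ℚ)
          - ((Finset.univ.filter fun i => i < τ⁻¹ L).card : ℚ) := by exact_mod_cast d4
    rw [card_gt, card_lt] at q1
    rw [card_ge, card_le] at q2
    rw [card_gt, card_lt] at q3
    rw [card_gt, card_lt] at q4
    have hi := Fin.is_le (σ⁻¹ L)
    have hk := Fin.is_le (τ⁻¹ L)
    linarith [q1, q2, q3, q4]
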